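/- arXiv:2310.16221 — 3 statements merged into one kernel-verified Lean document; each statement's English description precedes it below -/
import Mathlib

section
/- For natural numbers N, k, r with k + r ≤ N, the inequality C(N-r, k)/C(N, k) ≤ ((N - k)/N)^r holds, where C denotes binomial coefficients. Equivalently, the uniform-subset ablation quantity Δ^L = 1 - C(N-r,k)/C(N,k) is at least the Bernoulli quantity Δ^S = 1 - (1 - k/N)^r when the selection probability is p = 1 - k/N. -/
/-!
Removing one entity from a pool of `n + 1` multiplies `C(n + 1, k)` by `(n + 1 - k) / (n + 1)`,
and this factor only grows with the pool size, so it is at most `(N - k) / N`. Removing `r`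
entities one at a time therefore multiplies `C(N, k)` by at most `((N - k) / N) ^ r`.
-/

theorem Nat.cast_choose_mul_succ_eq {R : Type*} [CommRing R] (n k : ℕ) :
    (n.choose k : R) * (n + 1) = (n + 1).choose k * (n + 1 - k) := by
  rcases le_or_gt k (n + 1) with hk | hk
  · have := congrArg (Nat.cast : ℕ → R) (Nat.choose_mul_succ_eq n k)
    push_cast [Nat.cast_sub hk] at this
    exact this
  · rw [Nat.choose_eq_zero_of_lt (by omega), Nat.choose_eq_zero_of_lt hk]
    simp

lemma sub_div_self_le_sub_div_self {K : Type*} [Field K] [LinearOrder K] [IsStrictOrderedRing K]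
    {m N k : K} (hm : 0 < m) (hmN : m ≤ N) (hk : 0 ≤ k) :
    (m - k) / m ≤ (N - k) / N := by
  rw [sub_div, sub_div, div_self hm.ne', div_self (hm.trans_le hmN).ne']
  gcongr

lemma cast_choose_le_succ_mul {n k N : ℕ} (hn : n + 1 ≤ N) :
    (n.choose k : ℝ) ≤ (n + 1).choose k * (((N : ℝ) - k) / N) := by
  have hpos : (0 : ℝ) < n + 1 := by positivity
  have hnN : (n : ℝ) + 1 ≤ N := by exact_mod_cast hn
  calc (n.choose k : ℝ) = (n + 1).choose k * (((n : ℝ) + 1 - k) / (n + 1)) := by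
        rw [mul_div_assoc', eq_div_iff hpos.ne', Nat.cast_choose_mul_succ_eq]
    _ ≤ (n + 1).choose k * (((N : ℝ) - k) / N) :=
        mul_le_mul_of_nonneg_left (sub_div_self_le_sub_div_self hpos hnN k.cast_nonneg)
          (by positivity)

lemma cast_choose_sub_le {N k : ℕ} : ∀ r, k + r ≤ N →
    ((N - r).choose k : ℝ) ≤ N.choose k * (((N : ℝ) - k) / N) ^ r
  | 0, _ => by simp
  | r + 1, h => by
    have hq : (0 : ℝ) ≤ ((N : ℝ) - k) / N := by
      have : (k : ℝ) ≤ N := by exact_mod_cast (show k ≤ N by omega)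
      exact div_nonneg (sub_nonneg.mpr this) N.cast_nonneg
    have hstep := cast_choose_le_succ_mul (n := N - (r + 1)) (k := k) (N := N) (by omega)
    rw [show N - (r + 1) + 1 = N - r by omega] at hstep
    calc ((N - (r + 1)).choose k : ℝ) ≤ (N - r).choose k * (((N : ℝ) - k) / N) := hstep
      _ ≤ N.choose k * (((N : ℝ) - k) / N) ^ r * (((N : ℝ) - k) / N) := by
        gcongr
        exact cast_choose_sub_le r (by omega)
      _ = N.choose k * (((N : ℝ) - k) / N) ^ (r + 1) := by ring

/-- For k + r ≤ N: C(N-r,k)/C(N,k) ≤ ((N-k)/N)^r; equivalently the uniform-subset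
ablation quantity Δ^L = 1 - C(N-r,k)/C(N,k) dominates the Bernoulli quantity
Δ^S = 1 - (1 - k/N)^r with selection probability p = 1 - k/N. -/
theorem stmt10 (N k r : ℕ) (h : k + r ≤ N) :
    (((N - r).choose k : ℝ) / (N.choose k : ℝ) ≤ (((N : ℝ) - k) / N) ^ r) ∧
    (1 - (((N : ℝ) - k) / N) ^ r ≤ 1 - ((N - r).choose k : ℝ) / (N.choose k : ℝ)) := by
  have hchoose : (0 : ℝ) < N.choose k := by exact_mod_cast Nat.choose_pos (by omega)
  have hratio : ((N - r).choose k : ℝ) / N.choose k ≤ (((N : ℝ) - k) / N) ^ r := by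
    rw [div_le_iff₀' hchoose]
    exact cast_choose_sub_le r h
  exact ⟨hratio, sub_le_sub_left hratio 1⟩
end

section
/- Let v, ṽ ∈ [0,1]^I be probability vectors and a ∈ [0,1]. The optimal value of the LP min_{h ∈ [0,1]^I} h·ṽ subject to h·v = a satisfies max(0, a - (1 - Σ_i min(v_i, ṽ_i))) ≤ min value ≤ a; in particular if v = ṽ the optimal value is exactly a. -/
/-- Bounds on the discrete Neyman-Pearson LP value:
max(0, a - (1 - Σ min(v_i, ṽ_i))) ≤ min value ≤ a, with equality m(a) = a when v = ṽ. -/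
theorem stmt15 (I : ℕ) (v vt : Fin I → ℝ)
    (hv : ∀ i, v i ∈ Set.Icc (0:ℝ) 1) (hv1 : ∑ i, v i = 1)
    (hvt : ∀ i, vt i ∈ Set.Icc (0:ℝ) 1) (hvt1 : ∑ i, vt i = 1)
    (a : ℝ) (ha : a ∈ Set.Icc (0:ℝ) 1) :
    let m := sInf {t | ∃ h : Fin I → ℝ, (∀ i, h i ∈ Set.Icc (0:ℝ) 1) ∧
        (∑ i, h i * v i) = a ∧ t = ∑ i, h i * vt i}
    max 0 (a - (1 - ∑ i, min (v i) (vt i))) ≤ m ∧ m ≤ a ∧ (v = vt → m = a) := by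
  intro m
  set S : Set ℝ := {t | ∃ h : Fin I → ℝ, (∀ i, h i ∈ Set.Icc (0:ℝ) 1) ∧
      (∑ i, h i * v i) = a ∧ t = ∑ i, h i * vt i} with hSdef
  have hmem : a ∈ S := by
    refine ⟨fun _ => a, fun i => ha, ?_, ?_⟩
    · rw [← Finset.mul_sum, hv1, mul_one]
    · rw [← Finset.mul_sum, hvt1, mul_one]
  have hlb : ∀ t ∈ S, max 0 (a - (1 - ∑ i, min (v i) (vt i))) ≤ t := by
    rintro t ⟨h, hh, hhv, rfl⟩
    refine max_le ?_ ?_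
    · exact Finset.sum_nonneg fun i _ => mul_nonneg (hh i).1 (hvt i).1
    · have key : a - ∑ i, h i * vt i ≤ 1 - ∑ i, min (v i) (vt i) := by
        rw [← hhv, ← hv1, ← Finset.sum_sub_distrib, ← Finset.sum_sub_distrib]
        apply Finset.sum_le_sum
        intro i _
        rcases le_total (v i) (vt i) with hc | hc
        · rw [min_eq_left hc]
          nlinarith [(hh i).1]
        · rw [min_eq_right hc]
          nlinarith [(hh i).2]
      linarith
  have hlow : max 0 (a - (1 - ∑ i, min (v i) (vt i))) ≤ m :=
    le_csInf ⟨a, hmem⟩ hlb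
  have hub : m ≤ a := csInf_le ⟨_, hlb⟩ hmem
  refine ⟨hlow, hub, fun hveq => ?_⟩
  have hmin : ∑ i, min (v i) (vt i) = 1 := by
    subst hveq; simpa using hv1
  rw [hmin] at hlow
  refine le_antisymm hub ?_
  calc a = max 0 (a - (1 - 1)) := by rw [sub_self, sub_zero, max_eq_right ha.1]
    _ ≤ m := hlow
end

section
/- Suppose the lower-bound function satisfies, for each fixed perturbation norm ε, that the hierarchical lower bound for |C| perturbed rows equals L(|C|) = (1 - Δ(|C|)) · ℓ((a - Δ(|C|))/(1 - Δ(|C|))) where Δ(c) = 1 - p^c and ℓ : [0,1] → [0,1] is non-decreasing with ℓ(x) ≤ x. Then L is non-increasing in |C|, so the minimum of L over all X̃ with at most r perturbed rows is attained at |C| = r. -/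
/-- If the hierarchical lower bound for c perturbed rows is
L(c) = (1 - Δ(c))·ℓ((a - Δ(c))/(1 - Δ(c))) with Δ(c) = 1 - p^c and ℓ : [0,1] → [0,1]
non-decreasing with ℓ(x) ≤ x, then L is non-increasing in c, so the minimum over all
perturbations of at most r rows is attained at c = r. -/
theorem stmt17 (p a : ℝ) (hp0 : 0 < p) (hp1 : p ≤ 1) (r : ℕ)
    (ha : a ∈ Set.Icc (1 - p ^ r) 1)
    (ℓ : ℝ → ℝ) (hmono : MonotoneOn ℓ (Set.Icc 0 1))
    (hle : ∀ x ∈ Set.Icc (0:ℝ) 1, ℓ x ≤ x)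
    (hnonneg : ∀ x ∈ Set.Icc (0:ℝ) 1, 0 ≤ ℓ x) :
    let L : ℕ → ℝ := fun c => p ^ c * ℓ ((a - (1 - p ^ c)) / p ^ c)
    (∀ c₁ c₂ : ℕ, c₁ ≤ c₂ → c₂ ≤ r → L c₂ ≤ L c₁) ∧ (∀ c ≤ r, L r ≤ L c) := by
  obtain ⟨ha1, ha2⟩ := ha
  intro L
  have hpc : ∀ c : ℕ, (0:ℝ) < p ^ c := fun c => pow_pos hp0 c
  have hmonp : ∀ {m n : ℕ}, m ≤ n → p ^ n ≤ p ^ m := fun h =>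
    pow_le_pow_of_le_one hp0.le hp1 h
  have hx : ∀ c : ℕ, c ≤ r → (a - (1 - p ^ c)) / p ^ c ∈ Set.Icc (0:ℝ) 1 := by
    intro c hc
    constructor
    · apply div_nonneg _ (hpc c).le
      have := hmonp hc
      linarith
    · rw [div_le_one (hpc c)]; linarith
  have key : ∀ c₁ c₂ : ℕ, c₁ ≤ c₂ → c₂ ≤ r → L c₂ ≤ L c₁ := by
    intro c₁ c₂ h12 h2r
    have h1r := le_trans h12 h2r
    have hx1 := hx c₁ h1r
    have hx2 := hx c₂ h2r
    have h21 : p ^ c₂ ≤ p ^ c₁ := hmonp h12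
    have hxle : (a - (1 - p ^ c₂)) / p ^ c₂ ≤ (a - (1 - p ^ c₁)) / p ^ c₁ := by
      rw [div_le_div_iff₀ (hpc c₂) (hpc c₁)]
      nlinarith [mul_nonneg (by linarith : (0:ℝ) ≤ 1 - a)
        (by linarith : (0:ℝ) ≤ p ^ c₁ - p ^ c₂)]
    calc p ^ c₂ * ℓ ((a - (1 - p ^ c₂)) / p ^ c₂)
        ≤ p ^ c₁ * ℓ ((a - (1 - p ^ c₂)) / p ^ c₂) :=
          mul_le_mul_of_nonneg_right h21 (hnonneg _ hx2)
      _ ≤ p ^ c₁ * ℓ ((a - (1 - p ^ c₁)) / p ^ c₁) :=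
          mul_le_mul_of_nonneg_left (hmono hx2 hx1 hxle) (hpc c₁).le
  exact ⟨key, fun c hc => key c r hc le_rfl⟩
end
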